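/- arXiv:2307.00822 — 2 statements merged into one kernel-verified Lean document; each statement's English description precedes it below -/
import Mathlib

section
/- Under the elementwise interpolation estimates ‖v−I_h v‖_{L²(K)} ≤ C₀ h_K^{k+1}|v|_{H^{k+1}(K)}, ‖∇(v−I_h v)‖ ≤ C₁ h_K^k |v|_{H^{k+1}(K)}, ‖∂ₜ(v−I_h v)‖ ≤ C₁ h_K^k|v|_{H^{k+1}(K)}, ‖Δ(v−I_h v)‖ ≤ C₂ h_K^{k−1}|v|_{H^{k+1}(K)}, the boundary estimate ‖v−I_h v‖_{L²(∂K)} ≤ C_Γ h_K^{k+1/2}|v|_{H^{k+1}(K)}, and stabilization ε_K = h_K²/(c₁‖ã‖_K h_K + c₂ν), the interpolation error measured in the discrete norm satisfies ‖I_h u − u‖_{V_h} ≤ C h^k |u|_{H^{k+1}(Ω)}. -/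
/-!
Each contribution to the squared discrete norm is a multiple of `h^{2k} |u|²_{H^{k+1}}`.
The trace term carries `h^{2k+1} ≤ H h^{2k}`, the diffusive term is the gradient estimate.
For the streamline term, `e = u − I_h u` only has `‖∂ₜe + a·∇e − νΔe‖_K ≲ h_K^{k-1} |u|_K`,
since the Laplacian loses a power of `h_K` and `‖ã‖_K h_K + ν ≤ γ_B` controls the
coefficients; the weight `ε_K ≤ h_K²/(c₂ν)` restores the missing power. Summing the
elementwise bounds over the mesh recovers the global seminorm.
-/

open Finset

lemma sum_le_mul_sq_of_le_mul_sq {ι : Type*} {s : Finset ι} {f g : ι → ℝ} {c G : ℝ}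
    (hc : 0 ≤ c) (hf : ∀ i ∈ s, f i ≤ c * g i ^ 2) (hg : ∑ i ∈ s, g i ^ 2 ≤ G ^ 2) :
    ∑ i ∈ s, f i ≤ c * G ^ 2 :=
  calc ∑ i ∈ s, f i ≤ ∑ i ∈ s, c * g i ^ 2 := sum_le_sum hf
    _ = c * ∑ i ∈ s, g i ^ 2 := (mul_sum ..).symm
    _ ≤ c * G ^ 2 := mul_le_mul_of_nonneg_left hg hc

lemma rpow_natCast_add_half_sq {x : ℝ} (hx : 0 ≤ x) (k : ℕ) :
    (x ^ ((k : ℝ) + 1 / 2)) ^ 2 = (x ^ k) ^ 2 * x := by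
  rw [Real.rpow_add' hx (by positivity), Real.rpow_natCast, ← Real.sqrt_eq_rpow, mul_pow,
    Real.sq_sqrt hx]

lemma sq_le_of_le_mul_rpow_add_half {x C h H s : ℝ} {k : ℕ} (hx : 0 ≤ x) (hh : 0 ≤ h)
    (hhH : h ≤ H) (hxC : x ≤ C * h ^ ((k : ℝ) + 1 / 2) * s) :
    x ^ 2 ≤ C ^ 2 * H * (h ^ k) ^ 2 * s ^ 2 :=
  calc x ^ 2 ≤ (C * h ^ ((k : ℝ) + 1 / 2) * s) ^ 2 := pow_le_pow_left₀ hx hxC 2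
    _ = C ^ 2 * h * (h ^ k) ^ 2 * s ^ 2 := by
      rw [mul_pow, mul_pow, rpow_natCast_add_half_sq hh]; ring
    _ ≤ C ^ 2 * H * (h ^ k) ^ 2 * s ^ 2 := by gcongr

lemma sq_le_of_le_mul_pow {x C a h s : ℝ} {k : ℕ} (hx : 0 ≤ x) (ha : 0 ≤ a) (hah : a ≤ h)
    (hxC : x ≤ C * a ^ k * s) : x ^ 2 ≤ C ^ 2 * (h ^ k) ^ 2 * s ^ 2 :=
  calc x ^ 2 ≤ (C * a ^ k * s) ^ 2 := pow_le_pow_left₀ hx hxC 2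
    _ = C ^ 2 * (a ^ k) ^ 2 * s ^ 2 := by ring
    _ ≤ C ^ 2 * (h ^ k) ^ 2 * s ^ 2 := by gcongr

lemma le_mul_pow_pred_of_le_add {m t g l a ν C₁ C₂ hK H γB s : ℝ} {k : ℕ} (hk : k ≠ 0)
    (hm : m ≤ t + a * g + ν * l) (ht : t ≤ C₁ * hK ^ k * s) (hg : g ≤ C₁ * hK ^ k * s)
    (hl : l ≤ C₂ * hK ^ (k - 1) * s) (hC₁ : 0 ≤ C₁) (hC₂ : 0 ≤ C₂) (ha : 0 ≤ a)
    (hν : 0 ≤ ν) (hK0 : 0 ≤ hK) (hKH : hK ≤ H) (haν : a * hK + ν ≤ γB) (hs : 0 ≤ s) :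
    m ≤ (C₁ * H + (C₁ + C₂) * γB) * hK ^ (k - 1) * s := by
  have hsplit : C₁ * hK ^ k * s = C₁ * hK * (hK ^ (k - 1) * s) := by
    rw [← mul_pow_sub_one hk]; ring
  have hp : 0 ≤ hK ^ (k - 1) * s := by positivity
  have hcoef : C₁ * hK + C₁ * (a * hK) + C₂ * ν ≤ C₁ * H + (C₁ + C₂) * γB := by
    have := mul_le_mul_of_nonneg_left hKH hC₁
    have := mul_le_mul_of_nonneg_left (show a * hK ≤ γB by nlinarith) hC₁
    have := mul_le_mul_of_nonneg_left (show ν ≤ γB by nlinarith) hC₂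
    linarith
  calc m ≤ t + a * g + ν * l := hm
    _ ≤ C₁ * hK ^ k * s + a * (C₁ * hK ^ k * s) + ν * (C₂ * hK ^ (k - 1) * s) := by gcongr
    _ = (C₁ * hK + C₁ * (a * hK) + C₂ * ν) * (hK ^ (k - 1) * s) := by rw [hsplit]; ring
    _ ≤ (C₁ * H + (C₁ + C₂) * γB) * (hK ^ (k - 1) * s) := by gcongr
    _ = (C₁ * H + (C₁ + C₂) * γB) * hK ^ (k - 1) * s := by ring

lemma div_add_mul_sq_le_of_le_mul_pow_pred {m D hK h s w δ : ℝ} {k : ℕ} (hk : k ≠ 0)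
    (hw : 0 ≤ w) (hδ : 0 < δ) (hm0 : 0 ≤ m) (hm : m ≤ D * hK ^ (k - 1) * s)
    (hK0 : 0 ≤ hK) (hKh : hK ≤ h) :
    hK ^ 2 / (w + δ) * m ^ 2 ≤ D ^ 2 / δ * (h ^ k) ^ 2 * s ^ 2 :=
  calc hK ^ 2 / (w + δ) * m ^ 2 ≤ hK ^ 2 / δ * (D * hK ^ (k - 1) * s) ^ 2 := by
        gcongr
        linarith
    _ = D ^ 2 / δ * (hK * hK ^ (k - 1)) ^ 2 * s ^ 2 := by ring
    _ = D ^ 2 / δ * (hK ^ k) ^ 2 * s ^ 2 := by rw [mul_pow_sub_one hk]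
    _ ≤ D ^ 2 / δ * (h ^ k) ^ 2 * s ^ 2 := by gcongr

theorem interp_estimate_discrete_norm_general
    (V : Type*) [AddCommGroup V]
    (C₁ C₂ CΓ c₁ c₂ ν γB H : ℝ)
    (hC₁ : 0 < C₁) (hC₂ : 0 < C₂)
    (hc₁ : 0 < c₁) (hc₂ : 0 < c₂) (hν : 0 < ν) (hH : 0 < H) :
    ∃ C : ℝ, 0 < C ∧
      ∀ (ι : Type) (mesh : Finset ι) (hK aK : ι → ℝ) (h : ℝ) (k : ℕ)
        (Ih : V → V) (u : V)
        (nGammaT : V → ℝ) (nGrad nDt nLap nM : ι → V → ℝ)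
        (semK : ι → ℝ) (semΩ : ℝ),
        1 ≤ k → 0 < h → h ≤ H →
        (∀ K ∈ mesh, 0 < hK K ∧ hK K ≤ h) →
        (∀ K ∈ mesh, 0 ≤ aK K ∧ aK K * hK K + ν ≤ γB) →
        (0 ≤ nGammaT (u - Ih u)) →
        (∀ K ∈ mesh, 0 ≤ nGrad K (u - Ih u) ∧ 0 ≤ nDt K (u - Ih u) ∧
          0 ≤ nLap K (u - Ih u) ∧ 0 ≤ nM K (u - Ih u) ∧ 0 ≤ semK K) →
        -- triangle inequality for the space-time operator `M = ∂ₜ + a·∇ − νΔ`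
        (∀ K ∈ mesh, nM K (u - Ih u)
          ≤ nDt K (u - Ih u) + aK K * nGrad K (u - Ih u) + ν * nLap K (u - Ih u)) →
        -- elementwise interpolation estimates
        (∀ K ∈ mesh, nDt K (u - Ih u) ≤ C₁ * hK K ^ k * semK K) →
        (∀ K ∈ mesh, nGrad K (u - Ih u) ≤ C₁ * hK K ^ k * semK K) →
        (∀ K ∈ mesh, nLap K (u - Ih u) ≤ C₂ * hK K ^ (k - 1) * semK K) →
        -- boundary trace estimate on `Γ_T`
        (nGammaT (u - Ih u) ≤ CΓ * h ^ ((k : ℝ) + 1 / 2) * semΩ) →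
        -- the local seminorms add up to the global `H^{k+1}` seminorm
        (∑ K ∈ mesh, (semK K) ^ 2 ≤ semΩ ^ 2) → 0 ≤ semΩ →
        Real.sqrt ((nGammaT (u - Ih u)) ^ 2
            + ν * ∑ K ∈ mesh, (nGrad K (u - Ih u)) ^ 2
            + ∑ K ∈ mesh, (hK K ^ 2 / (c₁ * aK K * hK K + c₂ * ν))
                * (nM K (u - Ih u)) ^ 2)
          ≤ C * h ^ k * semΩ := by
  set D := C₁ * H + (C₁ + C₂) * γB
  set S := CΓ ^ 2 * H + ν * C₁ ^ 2 + D ^ 2 / (c₂ * ν) with hSdef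
  have hS : 0 < S := by positivity
  refine ⟨√S, Real.sqrt_pos.2 hS, ?_⟩
  intro ι mesh hK aK h k Ih u nGammaT nGrad nDt nLap nM semK semΩ
    hk hh hhH hmesh haK hGT0 hnn htri hDt hGrad hLap hGT hsum hsemΩ
  have hk0 : k ≠ 0 := by omega
  have boundary := sq_le_of_le_mul_rpow_add_half hGT0 hh.le hhH hGT
  have diffusive : ∑ K ∈ mesh, nGrad K (u - Ih u) ^ 2 ≤ C₁ ^ 2 * (h ^ k) ^ 2 * semΩ ^ 2 :=
    sum_le_mul_sq_of_le_mul_sq (by positivity) (fun K hKm => sq_le_of_le_mul_pow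
      (hnn K hKm).1 (hmesh K hKm).1.le (hmesh K hKm).2 (hGrad K hKm)) hsum
  have streamline : ∑ K ∈ mesh, hK K ^ 2 / (c₁ * aK K * hK K + c₂ * ν) * nM K (u - Ih u) ^ 2
      ≤ D ^ 2 / (c₂ * ν) * (h ^ k) ^ 2 * semΩ ^ 2 := by
    refine sum_le_mul_sq_of_le_mul_sq (by positivity) (fun K hKm => ?_) hsum
    obtain ⟨hK0, hKh⟩ := hmesh K hKm
    obtain ⟨ha0, haγ⟩ := haK K hKm
    obtain ⟨-, -, -, hM0, hs0⟩ := hnn K hKm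
    have hM := le_mul_pow_pred_of_le_add hk0 (htri K hKm) (hDt K hKm) (hGrad K hKm)
      (hLap K hKm) hC₁.le hC₂.le ha0 hν.le hK0.le (hKh.trans hhH) haγ hs0
    exact div_add_mul_sq_le_of_le_mul_pow_pred hk0 (by positivity) (by positivity) hM0 hM
      hK0.le hKh
  rw [Real.sqrt_le_left (by positivity)]
  calc _ ≤ CΓ ^ 2 * H * (h ^ k) ^ 2 * semΩ ^ 2 + ν * (C₁ ^ 2 * (h ^ k) ^ 2 * semΩ ^ 2)
        + D ^ 2 / (c₂ * ν) * (h ^ k) ^ 2 * semΩ ^ 2 := by gcongr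
    _ = (√S * h ^ k * semΩ) ^ 2 := by rw [mul_pow, mul_pow, Real.sq_sqrt hS.le, hSdef]; ring

/-- under the elementwise interpolation estimates (for the `L²` norm, the
gradient, the time derivative, the Laplacian and the final-time boundary trace) and with
stabilization `ε_K = h_K²/(c₁‖ã‖_K h_K + c₂ν)`, the interpolation error measured in the
discrete norm `‖w‖²_{V_h} = ‖w‖²_{Γ_T} + ν‖∇w‖² + Σ_K ε_K‖∂ₜw + a·∇w − νΔw‖²_K`
satisfies `‖I_h u − u‖_{V_h} ≤ C h^k |u|_{H^{k+1}(Ω)}`, with `C` independent of `h` and `u`. -/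
theorem interp_estimate_discrete_norm
    (V : Type*) [AddCommGroup V]
    (C₀ C₁ C₂ CΓ c₁ c₂ ν γB H : ℝ)
    (hC₀ : 0 < C₀) (hC₁ : 0 < C₁) (hC₂ : 0 < C₂) (hCΓ : 0 < CΓ)
    (hc₁ : 0 < c₁) (hc₂ : 0 < c₂) (hν : 0 < ν) (hγB : 0 < γB) (hH : 0 < H) :
    ∃ C : ℝ, 0 < C ∧
      ∀ (ι : Type) (mesh : Finset ι) (hK aK : ι → ℝ) (h : ℝ) (k : ℕ)
        (Ih : V → V) (u : V)
        (nGammaT : V → ℝ) (nGrad nDt nLap nM : ι → V → ℝ)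
        (semK : ι → ℝ) (semΩ : ℝ),
        1 ≤ k → 0 < h → h ≤ H →
        (∀ K ∈ mesh, 0 < hK K ∧ hK K ≤ h) →
        (∀ K ∈ mesh, 0 ≤ aK K ∧ aK K * hK K + ν ≤ γB) →
        (0 ≤ nGammaT (u - Ih u)) →
        (∀ K ∈ mesh, 0 ≤ nGrad K (u - Ih u) ∧ 0 ≤ nDt K (u - Ih u) ∧
          0 ≤ nLap K (u - Ih u) ∧ 0 ≤ nM K (u - Ih u) ∧ 0 ≤ semK K) →
        -- triangle inequality for the space-time operator `M = ∂ₜ + a·∇ − νΔ`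
        (∀ K ∈ mesh, nM K (u - Ih u)
          ≤ nDt K (u - Ih u) + aK K * nGrad K (u - Ih u) + ν * nLap K (u - Ih u)) →
        -- elementwise interpolation estimates
        (∀ K ∈ mesh, nDt K (u - Ih u) ≤ C₁ * hK K ^ k * semK K) →
        (∀ K ∈ mesh, nGrad K (u - Ih u) ≤ C₁ * hK K ^ k * semK K) →
        (∀ K ∈ mesh, nLap K (u - Ih u) ≤ C₂ * hK K ^ (k - 1) * semK K) →
        -- boundary trace estimate on `Γ_T`
        (nGammaT (u - Ih u) ≤ CΓ * h ^ ((k : ℝ) + 1 / 2) * semΩ) →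
        -- the local seminorms add up to the global `H^{k+1}` seminorm
        (∑ K ∈ mesh, (semK K) ^ 2 ≤ semΩ ^ 2) → 0 ≤ semΩ →
        Real.sqrt ((nGammaT (u - Ih u)) ^ 2
            + ν * ∑ K ∈ mesh, (nGrad K (u - Ih u)) ^ 2
            + ∑ K ∈ mesh, (hK K ^ 2 / (c₁ * aK K * hK K + c₂ * ν))
                * (nM K (u - Ih u)) ^ 2)
          ≤ C * h ^ k * semΩ :=
  interp_estimate_discrete_norm_general V C₁ C₂ CΓ c₁ c₂ ν γB H hC₁ hC₂ hc₁ hc₂ hν hH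
end

section
/- If u with u(·,0) = 0 on U and u = 0 on ∂U × (0,T) satisfies the weighted-norm identity, then b_h(u,u) = (1/2)‖u(·,T)‖²_{L²(U)} + ν‖∇u‖²_{L²(Ω)} + Σ_K ε_K ‖Mu‖²_K exactly (not just as an inequality), where b_h is the GLS bilinear form and a is divergence-free. -/
open MeasureTheory

/-- The `i`-th spatial partial derivative. -/
noncomputable def pderiv' (d : ℕ) (f : EuclideanSpace ℝ (Fin d) → ℝ)
    (i : Fin d) (x : EuclideanSpace ℝ (Fin d)) : ℝ :=
  fderiv ℝ f x (EuclideanSpace.single i 1)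

/-- The spatial Laplacian. -/
noncomputable def lap' (d : ℕ) (f : EuclideanSpace ℝ (Fin d) → ℝ)
    (x : EuclideanSpace ℝ (Fin d)) : ℝ :=
  ∑ i, pderiv' d (pderiv' d f i) i x

/-- The space-time advection-diffusion operator `Mu = ∂ₜu + a·∇u − νΔu`. -/
noncomputable def Mop (d : ℕ) (ν : ℝ)
    (a : EuclideanSpace ℝ (Fin d) → ℝ → EuclideanSpace ℝ (Fin d))
    (u : EuclideanSpace ℝ (Fin d) → ℝ → ℝ)
    (x : EuclideanSpace ℝ (Fin d)) (t : ℝ) : ℝ :=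
  deriv (u x) t + (∑ i, a x t i * pderiv' d (fun y => u y t) i x)
    - ν * lap' d (fun y => u y t) x

/-- The GLS-stabilized bilinear form
`b_h(u,v) = (∂ₜu, v) + (a·∇u, v) + (ν∇u, ∇v) + Σ_K ε_K (Mu, Mv)_K` on `Ω = U × (0,T)`. -/
noncomputable def bform (d : ℕ) (ν T : ℝ) (U : Set (EuclideanSpace ℝ (Fin d)))
    (a : EuclideanSpace ℝ (Fin d) → ℝ → EuclideanSpace ℝ (Fin d))
    (mesh : Finset (Set (EuclideanSpace ℝ (Fin d) × ℝ)))
    (ε : Set (EuclideanSpace ℝ (Fin d) × ℝ) → ℝ)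
    (u v : EuclideanSpace ℝ (Fin d) → ℝ → ℝ) : ℝ :=
  (∫ p in U ×ˢ Set.Ioo 0 T,
      (deriv (u p.1) p.2 * v p.1 p.2
        + (∑ i, a p.1 p.2 i * pderiv' d (fun y => u y p.2) i p.1) * v p.1 p.2
        + ν * ∑ i, pderiv' d (fun y => u y p.2) i p.1
              * pderiv' d (fun y => v y p.2) i p.1))
    + ∑ K ∈ mesh, ε K * ∫ p in K, Mop d ν a u p.1 p.2 * Mop d ν a v p.1 p.2

/-- The square of the discrete norm
`‖u‖²_{V_h} = ‖u‖²_{Γ_T} + ν‖∇u‖² + Σ_K ε_K ‖Mu‖²_K`. -/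
noncomputable def normVhSq (d : ℕ) (ν T : ℝ) (U : Set (EuclideanSpace ℝ (Fin d)))
    (a : EuclideanSpace ℝ (Fin d) → ℝ → EuclideanSpace ℝ (Fin d))
    (mesh : Finset (Set (EuclideanSpace ℝ (Fin d) × ℝ)))
    (ε : Set (EuclideanSpace ℝ (Fin d) × ℝ) → ℝ)
    (u : EuclideanSpace ℝ (Fin d) → ℝ → ℝ) : ℝ :=
  (∫ x in U, (u x T) ^ 2)
    + ν * (∫ p in U ×ˢ Set.Ioo 0 T, ∑ i, (pderiv' d (fun y => u y p.2) i p.1) ^ 2)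
    + ∑ K ∈ mesh, ε K * ∫ p in K, (Mop d ν a u p.1 p.2) ^ 2

/-! The time term is `∫ ∂ₜu · u = ½ ∫ ∂ₜ(u²)`, which by the fundamental theorem of calculus and
`u(·,0) = 0` equals `½‖u(·,T)‖²`. At each time the advection term is `½ ∫_U a·∇(u²)`; since `u`
vanishes on `∂U`, `u²` vanishes there to first order, so its extension by zero outside `U` is
differentiable on the whole space, and integrating by parts turns the advection term into
`-½ ∫_U (div a) u² = 0`. The diffusion and stabilization terms are already diagonal. -/

open Set Filter

theorem HasFDerivAt.indicator_of_frontier {E F : Type*} [NormedAddCommGroup E] [NormedSpace ℝ E]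
    [NormedAddCommGroup F] [NormedSpace ℝ F] {s : Set E} {φ : E → F} {φ' : E → E →L[ℝ] F}
    (hφ : ∀ x, HasFDerivAt φ (φ' x) x) (hφ₀ : ∀ x ∈ frontier s, φ x = 0)
    (hφ'₀ : ∀ x ∈ frontier s, φ' x = 0) (x : E) :
    HasFDerivAt (s.indicator φ) (s.indicator φ' x) x := by
  by_cases hint : x ∈ interior s
  · rw [indicator_of_mem (interior_subset hint)]
    exact (hφ x).congr_of_eventuallyEq <| eventually_of_mem (isOpen_interior.mem_nhds hint)
      fun y hy => indicator_of_mem (interior_subset hy) φ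
  by_cases hcl : x ∈ closure s
  · have hfr : x ∈ frontier s := ⟨hcl, hint⟩
    have hx : s.indicator φ x = 0 := by by_cases hs : x ∈ s <;> simp [hs, hφ₀ x hfr]
    have hx' : s.indicator φ' x = 0 := by by_cases hs : x ∈ s <;> simp [hs, hφ'₀ x hfr]
    rw [hx']
    -- `s.indicator φ` is dominated by `φ`, which vanishes to first order at `x`
    refine .of_isLittleO <|
      (Asymptotics.isBigO_of_le _ fun y => ?_).trans_isLittleO (hφ x).isLittleO
    simpa [hx, hφ₀ x hfr, hφ'₀ x hfr] using norm_indicator_le_norm_self φ y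
  · rw [indicator_of_notMem (notMem_of_notMem_closure hcl)]
    exact (hasFDerivAt_const 0 x).congr_of_eventuallyEq <|
      eventually_of_mem (isClosed_closure.isOpen_compl.mem_nhds hcl)
        fun y hy => indicator_of_notMem (notMem_of_notMem_closure hy) φ

theorem HasFDerivAt.indicator_sq_of_frontier {E : Type*} [NormedAddCommGroup E]
    [NormedSpace ℝ E] {s : Set E} {w : E → ℝ} (hw : Differentiable ℝ w)
    (hbd : ∀ x ∈ frontier s, w x = 0) (x : E) :
    HasFDerivAt (s.indicator fun x => w x ^ 2)
      (s.indicator (fun x => (2 * w x) • fderiv ℝ w x) x) x :=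
  HasFDerivAt.indicator_of_frontier (fun x => by simpa using (hw x).hasFDerivAt.pow 2)
    (by simp +contextual [hbd]) (by simp +contextual [hbd]) x

theorem Bornology.IsBounded.integrable_mul_indicator {X : Type*} [MetricSpace X] [ProperSpace X]
    [MeasurableSpace X] [OpensMeasurableSpace X] {μ : Measure X} [IsFiniteMeasureOnCompacts μ]
    {U : Set X} (hU : Bornology.IsBounded U) (hUm : MeasurableSet U) {f g : X → ℝ}
    (hf : Continuous f) (hg : Continuous g) :
    Integrable (fun x => f x * U.indicator g x) μ := by
  simp_rw [← indicator_mul_right]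
  exact (integrable_indicator_iff hUm).2 <|
    ((hf.mul hg).continuousOn.integrableOn_compact hU.isCompact_closure).mono_set subset_closure

section Advection

variable {d : ℕ}

theorem continuous_pderiv' {f : EuclideanSpace ℝ (Fin d) → ℝ} (hf : ContDiff ℝ 1 f) (i : Fin d) :
    Continuous (pderiv' d f i) :=
  (hf.continuous_fderiv one_ne_zero).clm_apply continuous_const

theorem integral_advection_mul_self_eq_zero {U : Set (EuclideanSpace ℝ (Fin d))}
    (hU : Bornology.IsBounded U) (hUm : MeasurableSet U)
    {b : EuclideanSpace ℝ (Fin d) → EuclideanSpace ℝ (Fin d)} (hb : ContDiff ℝ 1 b)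
    (hdiv : ∀ x ∈ U, ∑ i, pderiv' d (fun y => b y i) i x = 0)
    {w : EuclideanSpace ℝ (Fin d) → ℝ} (hw : ContDiff ℝ 1 w) (hbd : ∀ x ∈ frontier U, w x = 0) :
    ∫ x in U, (∑ i, b x i * pderiv' d w i x) * w x = 0 := by
  set φ := U.indicator fun x => w x ^ 2
  have hφ := HasFDerivAt.indicator_sq_of_frontier (hw.differentiable one_ne_zero) hbd
  have hφ_partial : ∀ i x, fderiv ℝ φ x (EuclideanSpace.single i 1)
      = U.indicator (fun x => 2 * w x * pderiv' d w i x) x := by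
    intro i x
    rw [(hφ x).fderiv]
    by_cases hx : x ∈ U <;> simp [hx, pderiv']
  have hb_i : ∀ i, ContDiff ℝ 1 (fun y => b y i) :=
    fun i => (EuclideanSpace.proj i : EuclideanSpace ℝ (Fin d) →L[ℝ] ℝ).contDiff.comp hb
  have hint_left : ∀ i, Integrable fun x => pderiv' d (fun y => b y i) i x * φ x := fun i =>
    hU.integrable_mul_indicator hUm (continuous_pderiv' (hb_i i) i) (by fun_prop)
  have hint_right : ∀ i, Integrable fun x => b x i * fderiv ℝ φ x (EuclideanSpace.single i 1) :=
    fun i => by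
      simp_rw [hφ_partial]
      exact hU.integrable_mul_indicator hUm (hb_i i).continuous
        (by have := continuous_pderiv' hw i; fun_prop)
  have hibp : ∀ i, (∫ x, b x i * fderiv ℝ φ x (EuclideanSpace.single i 1))
      + ∫ x, pderiv' d (fun y => b y i) i x * φ x = 0 := fun i => by
    rw [integral_mul_fderiv_eq_neg_fderiv_mul_of_integrable (hint_left i) (hint_right i)
      (hU.integrable_mul_indicator hUm (hb_i i).continuous (by fun_prop))
      (fun x _ => (hb_i i).differentiable one_ne_zero x) fun x _ => (hφ x).differentiableAt]
    exact neg_add_cancel _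
  have hdiv_mul : ∀ x, (∑ i, pderiv' d (fun y => b y i) i x) * φ x = 0 := fun x => by
    by_cases hx : x ∈ U <;> simp [φ, hx, hdiv]
  calc ∫ x in U, (∑ i, b x i * pderiv' d w i x) * w x
      = (∫ x, ∑ i, (b x i * fderiv ℝ φ x (EuclideanSpace.single i 1)
          + pderiv' d (fun y => b y i) i x * φ x)) / 2 := by
        rw [← integral_indicator hUm, ← integral_div]
        congr 1 with x
        simp only [Finset.sum_add_distrib, ← Finset.sum_mul, hdiv_mul, hφ_partial]
        by_cases hx : x ∈ U
        · simp only [indicator_of_mem hx, add_zero, Finset.sum_mul, Finset.sum_div]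
          exact Finset.sum_congr rfl fun i _ => by ring
        · simp [hx]
    _ = 0 := by
        rw [integral_finsetSum _ fun i _ => (hint_right i).fun_add (hint_left i)]
        simp [integral_add (hint_right _) (hint_left _), hibp]

end Advection

theorem integral_Ioo_deriv_mul_self {f : ℝ → ℝ} {a b : ℝ} (hab : a < b)
    (hf : ContDiffOn ℝ 1 f (Icc a b)) :
    ∫ t in Ioo a b, deriv f t * f t = (f b ^ 2 - f a ^ 2) / 2 := by
  have hderiv : ∀ t ∈ Ioo a b, HasDerivAt f (deriv f t) t := fun t ht =>
    ((hf.differentiableOn one_ne_zero t (Ioo_subset_Icc_self ht)).differentiableAt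
      (Icc_mem_nhds ht.1 ht.2)).hasDerivAt
  -- on `Ioo a b`, `deriv f` agrees with `derivWithin f (Icc a b)`, which is continuous on `Icc a b`
  have hint : IntegrableOn (fun t => deriv f t * f t) (Ioo a b) :=
    (((hf.continuousOn_derivWithin (uniqueDiffOn_Icc hab) le_rfl).mul hf.continuousOn
      |>.integrableOn_compact isCompact_Icc).mono_set Ioo_subset_Icc_self).congr_fun
      (fun t ht => by rw [Pi.mul_apply, derivWithin_of_mem_nhds (Icc_mem_nhds ht.1 ht.2)])
      measurableSet_Ioo
  rw [← integral_Ioc_eq_integral_Ioo, ← intervalIntegral.integral_of_le hab.le,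
    intervalIntegral.integral_eq_sub_of_hasDerivAt_of_le (f := fun t => f t ^ 2 / 2) hab.le
      (hf.continuousOn.pow 2 |>.div_const 2)
      (fun t ht => ((hderiv t ht).pow 2 |>.div_const 2).congr_deriv (by ring))
      ((intervalIntegrable_iff_integrableOn_Ioo_of_le hab.le).2 hint)]
  ring

theorem setIntegral_prod_eq_zero_of_forall {α β E : Type*} [MeasurableSpace α]
    [MeasurableSpace β] [NormedAddCommGroup E] [NormedSpace ℝ E] {μ : Measure α} {ν : Measure β}
    [SFinite μ] [SFinite ν] {s : Set α} {t : Set β} {f : α × β → E}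
    (hf : IntegrableOn f (s ×ˢ t) (μ.prod ν)) (ht : MeasurableSet t)
    (h : ∀ y ∈ t, ∫ x in s, f (x, y) ∂μ = 0) :
    ∫ z in s ×ˢ t, f z ∂μ.prod ν = 0 := by
  rw [IntegrableOn, ← Measure.prod_restrict] at hf
  rw [← Measure.prod_restrict, integral_prod_symm f hf, setIntegral_congr_fun ht h, integral_zero]

theorem gls_diagonal_identity_general
    (d : ℕ) (ν T : ℝ) (hT : 0 < T)
    (U : Set (EuclideanSpace ℝ (Fin d)))
    (hU : Bornology.IsBounded U) (hUmeas : MeasurableSet U)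
    (a : EuclideanSpace ℝ (Fin d) → ℝ → EuclideanSpace ℝ (Fin d))
    (ha : ∀ t ∈ Set.Icc (0:ℝ) T, ContDiff ℝ 1 (fun y => a y t))
    (hdiv : ∀ t ∈ Set.Icc (0:ℝ) T, ∀ x ∈ U,
      ∑ i, pderiv' d (fun y => a y t i) i x = 0)
    (mesh : Finset (Set (EuclideanSpace ℝ (Fin d) × ℝ)))
    (ε : Set (EuclideanSpace ℝ (Fin d) × ℝ) → ℝ)
    (u : EuclideanSpace ℝ (Fin d) → ℝ → ℝ)
    (hregt : ∀ x ∈ U, ContDiffOn ℝ 1 (u x) (Set.Icc 0 T))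
    (hregx : ∀ t ∈ Set.Icc (0:ℝ) T, ContDiff ℝ 2 (fun y => u y t))
    (hic : ∀ x ∈ U, u x 0 = 0)
    (hlateral : ∀ x ∈ frontier U, ∀ t ∈ Set.Icc (0:ℝ) T, u x t = 0)
    (hint1 : IntegrableOn (fun p : EuclideanSpace ℝ (Fin d) × ℝ =>
      deriv (u p.1) p.2 * u p.1 p.2) (U ×ˢ Set.Ioo 0 T))
    (hint2 : IntegrableOn (fun p : EuclideanSpace ℝ (Fin d) × ℝ =>
      (∑ i, a p.1 p.2 i * pderiv' d (fun y => u y p.2) i p.1) * u p.1 p.2)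
      (U ×ˢ Set.Ioo 0 T))
    (hint3 : IntegrableOn (fun p : EuclideanSpace ℝ (Fin d) × ℝ =>
      ∑ i, (pderiv' d (fun y => u y p.2) i p.1) ^ 2) (U ×ˢ Set.Ioo 0 T)) :
    bform d ν T U a mesh ε u u
      = (1 / 2) * (∫ x in U, (u x T) ^ 2)
        + ν * (∫ p in U ×ˢ Set.Ioo 0 T, ∑ i, (pderiv' d (fun y => u y p.2) i p.1) ^ 2)
        + ∑ K ∈ mesh, ε K * ∫ p in K, (Mop d ν a u p.1 p.2) ^ 2 := by
  have hvol : (volume : Measure (EuclideanSpace ℝ (Fin d) × ℝ)) = volume.prod volume := rfl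
  have htime : ∫ p in U ×ˢ Ioo 0 T, deriv (u p.1) p.2 * u p.1 p.2
      = (1 / 2) * ∫ x in U, u x T ^ 2 := by
    rw [hvol, setIntegral_prod _ (hvol ▸ hint1), ← integral_const_mul]
    refine setIntegral_congr_fun hUmeas fun x hx => ?_
    rw [integral_Ioo_deriv_mul_self hT (hregt x hx), hic x hx]
    ring
  have hadvection : ∫ p in U ×ˢ Ioo 0 T,
      (∑ i, a p.1 p.2 i * pderiv' d (fun y => u y p.2) i p.1) * u p.1 p.2 = 0 :=
    setIntegral_prod_eq_zero_of_forall (hvol ▸ hint2) measurableSet_Ioo fun t ht =>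
      integral_advection_mul_self_eq_zero hU hUmeas (ha t (Ioo_subset_Icc_self ht))
        (hdiv t (Ioo_subset_Icc_self ht)) ((hregx t (Ioo_subset_Icc_self ht)).of_le one_le_two)
        fun x hx => hlateral x hx t (Ioo_subset_Icc_self ht)
  rw [bform]
  simp only [← pow_two]
  rw [integral_add (hint1.fun_add hint2) (hint3.const_mul ν), integral_add hint1 hint2, htime,
    hadvection, integral_const_mul]
  ring

/-- for `u` vanishing at `t = 0` and on the lateral boundary, with
divergence-free advection, the GLS bilinear form satisfies the exact identity
`b_h(u,u) = (1/2)‖u(·,T)‖²_{L²(U)} + ν‖∇u‖²_{L²(Ω)} + Σ_K ε_K ‖Mu‖²_K`. -/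
theorem gls_diagonal_identity
    (d : ℕ) (ν T : ℝ) (hν : 0 < ν) (hT : 0 < T)
    (U : Set (EuclideanSpace ℝ (Fin d)))
    (hU : Bornology.IsBounded U) (hUmeas : MeasurableSet U)
    (a : EuclideanSpace ℝ (Fin d) → ℝ → EuclideanSpace ℝ (Fin d))
    (ha : ∀ t ∈ Set.Icc (0:ℝ) T, ContDiff ℝ 1 (fun y => a y t))
    (hdiv : ∀ t ∈ Set.Icc (0:ℝ) T, ∀ x ∈ U,
      ∑ i, pderiv' d (fun y => a y t i) i x = 0)
    (mesh : Finset (Set (EuclideanSpace ℝ (Fin d) × ℝ)))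
    (ε : Set (EuclideanSpace ℝ (Fin d) × ℝ) → ℝ)
    (hmesh : ∀ K ∈ mesh, K ⊆ U ×ˢ Set.Ioo 0 T)
    (u : EuclideanSpace ℝ (Fin d) → ℝ → ℝ)
    (hregt : ∀ x ∈ U, ContDiffOn ℝ 1 (u x) (Set.Icc 0 T))
    (hregx : ∀ t ∈ Set.Icc (0:ℝ) T, ContDiff ℝ 2 (fun y => u y t))
    (hic : ∀ x ∈ U, u x 0 = 0)
    (hlateral : ∀ x ∈ frontier U, ∀ t ∈ Set.Icc (0:ℝ) T, u x t = 0)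
    (hint1 : IntegrableOn (fun p : EuclideanSpace ℝ (Fin d) × ℝ =>
      deriv (u p.1) p.2 * u p.1 p.2) (U ×ˢ Set.Ioo 0 T))
    (hint2 : IntegrableOn (fun p : EuclideanSpace ℝ (Fin d) × ℝ =>
      (∑ i, a p.1 p.2 i * pderiv' d (fun y => u y p.2) i p.1) * u p.1 p.2)
      (U ×ˢ Set.Ioo 0 T))
    (hint3 : IntegrableOn (fun p : EuclideanSpace ℝ (Fin d) × ℝ =>
      ∑ i, (pderiv' d (fun y => u y p.2) i p.1) ^ 2) (U ×ˢ Set.Ioo 0 T)) :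
    bform d ν T U a mesh ε u u
      = (1 / 2) * (∫ x in U, (u x T) ^ 2)
        + ν * (∫ p in U ×ˢ Set.Ioo 0 T, ∑ i, (pderiv' d (fun y => u y p.2) i p.1) ^ 2)
        + ∑ K ∈ mesh, ε K * ∫ p in K, (Mop d ν a u p.1 p.2) ^ 2 :=
  gls_diagonal_identity_general d ν T hT U hU hUmeas a ha hdiv mesh ε u hregt hregx hic hlateral
    hint1 hint2 hint3
end
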